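/- arXiv:1303.2489 — 3 statements merged into one kernel-verified Lean document; each statement's English description precedes it below -/
import Mathlib

section
/- Soundness of well-formedness: if a stack s and heap h satisfy a spatial conjunction Σ, then s satisfies WellFormed(Σ), i.e., no two distinct conjuncts of Σ collide under s. -/
def Heap := ℤ → Option ℤ
def Stack := String → ℤ

def hemp : Heap := fun _ => none
def hsingle (a v : ℤ) : Heap := fun l => if l = a then some v else none
def hdisj (h₁ h₂ : Heap) : Prop := ∀ l, h₁ l = none ∨ h₂ l = none
def hunion (h₁ h₂ : Heap) : Heap := fun l =>
  match h₁ l with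
  | some v => some v
  | none => h₂ l
def hdom (h : Heap) : Set ℤ := {l | h l ≠ none}

/-- Acyclic list segment: `Lseg a b h` means `h` is a list segment from `a` to `b`. -/
inductive Lseg : ℤ → ℤ → Heap → Prop
  | nil (a : ℤ) : Lseg a a hemp
  | cons {a b c : ℤ} {h : Heap} (hne : a ≠ b) (hfresh : h a = none)
      (ht : Lseg c b h) : Lseg a b (hunion (hsingle a c) h)

/-- Spatial predicates. -/
inductive SP where
  | emp : SP
  | next (x y : String) : SP
  | lseg (x y : String) : SP

/-- Satisfaction of a single spatial predicate. -/
def sat (s : Stack) (h : Heap) : SP → Prop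
  | .emp => h = hemp
  | .next x y => h = hsingle (s x) (s y)
  | .lseg x y => Lseg (s x) (s y) h

/-- Satisfaction of a spatial conjunction (list of predicates). -/
def satList (s : Stack) (h : Heap) : List SP → Prop
  | [] => h = hemp
  | S :: Sg => ∃ h₁ h₂, hdisj h₁ h₂ ∧ h = hunion h₁ h₂ ∧ sat s h₁ S ∧ satList s h₂ Sg

/-- Emptiness condition of a spatial predicate. -/
def emptyCond (s : Stack) : SP → Prop
  | .emp => True
  | .next _ _ => False
  | .lseg x y => s x = s y

/-- Address of a spatial predicate (dummy value 0 for `emp`, which is always empty). -/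
def addrVal (s : Stack) : SP → ℤ
  | .emp => 0
  | .next x _ => s x
  | .lseg x _ => s x

def collide (s : Stack) (S S' : SP) : Prop :=
  ¬ emptyCond s S ∧ ¬ emptyCond s S' ∧ addrVal s S = addrVal s S'

def wellFormed (s : Stack) (Sg : List SP) : Prop :=
  List.Pairwise (fun S S' => ¬ collide s S S') Sg

/-! Every non-empty conjunct owns the cell at its address, and the sub-heaps of a spatial
conjunction are disjoint, so two non-empty conjuncts cannot share an address. -/

lemma mem_hdom_hunion {h₁ h₂ : Heap} {l : ℤ} :
    l ∈ hdom (hunion h₁ h₂) ↔ l ∈ hdom h₁ ∨ l ∈ hdom h₂ := by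
  simp only [hdom, hunion, Set.mem_ofPred_eq]
  cases h₁ l <;> simp

lemma hdisj.disjoint_hdom {h₁ h₂ : Heap} (hd : hdisj h₁ h₂) : Disjoint (hdom h₁) (hdom h₂) :=
  Set.disjoint_left.mpr fun l h₁l h₂l => (hd l).elim h₁l h₂l

lemma Lseg.start_mem_hdom {a b : ℤ} {h : Heap} (hl : Lseg a b h) (hne : a ≠ b) : a ∈ hdom h := by
  cases hl with
  | nil => exact absurd rfl hne
  | cons => exact mem_hdom_hunion.mpr (Or.inl (by simp [hdom, hsingle]))

lemma sat.addrVal_mem_hdom {s : Stack} {h : Heap} {S : SP} (hS : sat s h S)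
    (hne : ¬ emptyCond s S) : addrVal s S ∈ hdom h := by
  cases S with
  | emp => exact absurd trivial hne
  | next x y => subst hS; simp [hdom, hsingle, addrVal]
  | lseg x y => exact Lseg.start_mem_hdom hS hne

lemma satList.addrVal_mem_hdom {s : Stack} {h : Heap} {Sg : List SP} (hSg : satList s h Sg)
    {S : SP} (hmem : S ∈ Sg) (hne : ¬ emptyCond s S) : addrVal s S ∈ hdom h := by
  induction Sg generalizing h with
  | nil => cases hmem
  | cons T Tg ih =>
    obtain ⟨h₁, h₂, -, rfl, hT, hTg⟩ := hSg
    rcases List.mem_cons.mp hmem with rfl | hmem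
    · exact mem_hdom_hunion.mpr (Or.inl (hT.addrVal_mem_hdom hne))
    · exact mem_hdom_hunion.mpr (Or.inr (ih hTg hmem))

theorem stmt2 (s : Stack) (h : Heap) (Sg : List SP) (hs : satList s h Sg) :
    wellFormed s Sg := by
  induction Sg generalizing h with
  | nil => exact List.Pairwise.nil
  | cons T Tg ih =>
    obtain ⟨h₁, h₂, hd, -, hT, hTg⟩ := hs
    refine List.Pairwise.cons (fun S hmem ⟨hneT, hneS, haddr⟩ => ?_) (ih h₂ hTg)
    have hT_owns : addrVal s S ∈ hdom h₁ := haddr ▸ hT.addrVal_mem_hdom hneT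
    exact Set.disjoint_left.mp hd.disjoint_hdom hT_owns (hTg.addrVal_mem_hdom hmem hneS)
end

section
/- Completeness of well-formedness: if a stack s satisfies WellFormed(Σ) for a spatial conjunction Σ = S₁ ∗ ... ∗ Sₙ, then there exists a heap h with s,h ⊨ Σ, and moreover the domain of h equals { s(Addr(Sᵢ)) : s ⊨ ¬Empty(Sᵢ) }. -/
/-! Each predicate `S` has a model whose domain is `{addrVal s S}` when `S` is nonempty and `∅`
otherwise; a nonempty `lseg x y` is modelled by the single cell `x ↦ y`. Well-formedness says
precisely that these domains are pairwise disjoint, so the union of the models satisfies `Σ`. -/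

lemma hunion_hemp (h : Heap) : hunion h hemp = h := by
  funext l
  unfold hunion hemp
  cases h l <;> rfl

lemma hdom_hunion (h₁ h₂ : Heap) : hdom (hunion h₁ h₂) = hdom h₁ ∪ hdom h₂ := by
  ext l
  simp only [hdom, hunion, Set.mem_union, Set.mem_ofPred_eq]
  cases h₁ l <;> simp

lemma hdisj_iff_disjoint_hdom {h₁ h₂ : Heap} : hdisj h₁ h₂ ↔ Disjoint (hdom h₁) (hdom h₂) := by
  simp only [hdisj, hdom, Set.disjoint_left, Set.mem_ofPred_eq, ne_eq, not_not,
    or_iff_not_imp_left]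

lemma lseg_single {a b : ℤ} (hab : a ≠ b) : Lseg a b (hsingle a b) := by
  simpa only [hunion_hemp] using Lseg.cons hab rfl (Lseg.nil b)

def cellHeap (s : Stack) : SP → Heap
  | .emp => hemp
  | .next x y => hsingle (s x) (s y)
  | .lseg x y => if s x = s y then hemp else hsingle (s x) (s y)

lemma sat_cellHeap (s : Stack) (S : SP) : sat s (cellHeap s S) S := by
  cases S with
  | emp => rfl
  | next x y => rfl
  | lseg x y =>
    by_cases hxy : s x = s y
    · simp only [sat, cellHeap, if_pos hxy]
      exact hxy ▸ Lseg.nil (s x)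
    · simpa only [sat, cellHeap, if_neg hxy] using lseg_single hxy

lemma hdom_cellHeap (s : Stack) (S : SP) :
    hdom (cellHeap s S) = {v | ¬ emptyCond s S ∧ v = addrVal s S} := by
  ext v
  cases S with
  | emp => simp [cellHeap, hemp, hdom, emptyCond]
  | next x y => simp [cellHeap, hdom, hsingle, emptyCond, addrVal]
  | lseg x y =>
    by_cases hxy : s x = s y
    · simp [cellHeap, hxy, hdom, hemp, emptyCond]
    · simp [cellHeap, hxy, hdom, hsingle, emptyCond, addrVal]

def listHeap (s : Stack) (Sg : List SP) : Heap :=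
  Sg.foldr (fun S h => hunion (cellHeap s S) h) hemp

lemma hdom_listHeap (s : Stack) (Sg : List SP) :
    hdom (listHeap s Sg) = {v | ∃ S ∈ Sg, ¬ emptyCond s S ∧ v = addrVal s S} := by
  induction Sg with
  | nil => ext v; simp [listHeap, hdom, hemp]
  | cons S Sg ih =>
    ext v
    simp only [listHeap, List.foldr_cons] at ih ⊢
    simp only [hdom_hunion, hdom_cellHeap, ih, Set.mem_union, Set.mem_ofPred_eq,
      List.exists_mem_cons_iff]

lemma satList_listHeap {s : Stack} {Sg : List SP} (hwf : wellFormed s Sg) :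
    satList s (listHeap s Sg) Sg := by
  induction Sg with
  | nil => rfl
  | cons S Sg ih =>
    obtain ⟨hnc, hwf⟩ := List.pairwise_cons.mp hwf
    have hcell_disj : hdisj (cellHeap s S) (listHeap s Sg) := by
      rw [hdisj_iff_disjoint_hdom, hdom_cellHeap, hdom_listHeap, Set.disjoint_left]
      rintro _ ⟨hne, rfl⟩ ⟨S', hS', hne', haddr⟩
      exact hnc S' hS' ⟨hne, hne', haddr⟩
    exact ⟨_, _, hcell_disj, rfl, sat_cellHeap s S, ih hwf⟩

theorem stmt3 (s : Stack) (Sg : List SP) (hwf : wellFormed s Sg) :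
    ∃ h : Heap, satList s h Sg ∧
      hdom h = {v | ∃ S ∈ Sg, ¬ emptyCond s S ∧ v = addrVal s S} :=
  ⟨listHeap s Sg, satList_listHeap hwf, hdom_listHeap s Sg⟩
end

section
/- A spatial conjunction Σ is satisfiable (by some stack-heap pair) if and only if the pure formula WellFormed(Σ) is satisfiable (by some stack). -/
/-!
A model allocates the address of every non-empty predicate, and the separating conjunction keeps
these addresses apart, so no two non-empty predicates can share an address. Conversely, under a
well-formed stack each non-empty predicate is satisfied by the single cell at its address (a
one-cell list segment when it is an `lseg`), and well-formedness makes these cells disjoint.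
-/

lemma hunion_eq_none {h₁ h₂ : Heap} {l : ℤ} :
    hunion h₁ h₂ l = none ↔ h₁ l = none ∧ h₂ l = none := by
  unfold hunion
  cases h₁ l <;> simp

lemma eq_of_hsingle_ne_none {a v l : ℤ} (h : hsingle a v l ≠ none) : l = a := by
  by_contra hl
  exact h (if_neg hl)

lemma Lseg.apply_ne_none {a b : ℤ} {h : Heap} (hl : Lseg a b h) (hne : a ≠ b) : h a ≠ none := by
  cases hl with
  | nil => exact absurd rfl hne
  | cons => simp [hunion, hsingle]

lemma Lseg.hsingle {a b : ℤ} (hne : a ≠ b) : Lseg a b (hsingle a b) := by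
  simpa [hunion_hemp] using Lseg.cons hne rfl (Lseg.nil b)

lemma sat_addrVal_ne_none {s : Stack} {h : Heap} {S : SP} (hs : sat s h S)
    (hne : ¬ emptyCond s S) : h (addrVal s S) ≠ none := by
  cases S with
  | emp => exact absurd trivial hne
  | next x y => rw [show h = _ from hs]; simp [hsingle, addrVal]
  | lseg x y => exact Lseg.apply_ne_none hs hne

lemma satList_addrVal_ne_none {s : Stack} {h : Heap} {Sg : List SP} (hs : satList s h Sg)
    {S : SP} (hmem : S ∈ Sg) (hne : ¬ emptyCond s S) : h (addrVal s S) ≠ none := by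
  induction Sg generalizing h with
  | nil => cases hmem
  | cons T Tg ih =>
    obtain ⟨h₁, h₂, -, rfl, hT, hTg⟩ := hs
    rw [ne_eq, hunion_eq_none, not_and_or]
    rcases List.mem_cons.mp hmem with rfl | hmem
    · exact .inl (sat_addrVal_ne_none hT hne)
    · exact .inr (ih hTg hmem)

lemma wellFormed_of_satList {s : Stack} {h : Heap} {Sg : List SP} (hs : satList s h Sg) :
    wellFormed s Sg := by
  induction Sg generalizing h with
  | nil => exact .nil
  | cons T Tg ih =>
    obtain ⟨h₁, h₂, hdisj, rfl, hT, hTg⟩ := hs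
    refine .cons (fun S hmem ⟨hneT, hneS, haddr⟩ => ?_) (ih hTg)
    have h₁_ne := sat_addrVal_ne_none hT hneT
    have h₂_ne := satList_addrVal_ne_none hTg hmem hneS
    rw [← haddr] at h₂_ne
    exact (hdisj (addrVal s T)).elim h₁_ne h₂_ne

def canonicalHeap (s : Stack) : SP → Heap
  | .emp => hemp
  | .next x y => hsingle (s x) (s y)
  | .lseg x y => if s x = s y then hemp else hsingle (s x) (s y)

def canonicalHeapList (s : Stack) : List SP → Heap
  | [] => hemp
  | S :: Sg => hunion (canonicalHeap s S) (canonicalHeapList s Sg)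

lemma sat_canonicalHeap (s : Stack) (S : SP) : sat s (canonicalHeap s S) S := by
  cases S with
  | emp => rfl
  | next x y => rfl
  | lseg x y =>
    show Lseg (s x) (s y) (if s x = s y then hemp else hsingle (s x) (s y))
    split_ifs with hxy
    · exact hxy ▸ Lseg.nil (s x)
    · exact Lseg.hsingle hxy

lemma canonicalHeap_ne_none {s : Stack} {S : SP} {l : ℤ} (h : canonicalHeap s S l ≠ none) :
    ¬ emptyCond s S ∧ l = addrVal s S := by
  cases S with
  | emp => exact absurd rfl h
  | next x y => exact ⟨id, eq_of_hsingle_ne_none h⟩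
  | lseg x y =>
    rw [canonicalHeap] at h
    split_ifs at h with hxy
    · exact absurd rfl h
    · exact ⟨hxy, eq_of_hsingle_ne_none h⟩

lemma canonicalHeapList_ne_none {s : Stack} {Sg : List SP} {l : ℤ}
    (h : canonicalHeapList s Sg l ≠ none) : ∃ S ∈ Sg, ¬ emptyCond s S ∧ l = addrVal s S := by
  induction Sg with
  | nil => exact absurd rfl h
  | cons T Tg ih =>
    rw [canonicalHeapList, ne_eq, hunion_eq_none, not_and_or] at h
    rcases h with h | h
    · exact ⟨T, List.mem_cons_self, canonicalHeap_ne_none h⟩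
    · obtain ⟨S, hmem, hS⟩ := ih h
      exact ⟨S, List.mem_cons_of_mem T hmem, hS⟩

lemma hdisj_canonicalHeap_canonicalHeapList {s : Stack} {T : SP} {Sg : List SP}
    (hT : ∀ S ∈ Sg, ¬ collide s T S) : hdisj (canonicalHeap s T) (canonicalHeapList s Sg) := by
  intro l
  by_contra! ⟨hl₁, hl₂⟩
  obtain ⟨hneT, rfl⟩ := canonicalHeap_ne_none hl₁
  obtain ⟨S, hmem, hneS, haddr⟩ := canonicalHeapList_ne_none hl₂
  exact hT S hmem ⟨hneT, hneS, haddr⟩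

lemma satList_canonicalHeapList {s : Stack} {Sg : List SP} (hwf : wellFormed s Sg) :
    satList s (canonicalHeapList s Sg) Sg := by
  induction Sg with
  | nil => rfl
  | cons T Tg ih =>
    obtain ⟨hT, hTg⟩ := List.pairwise_cons.mp hwf
    exact ⟨_, _, hdisj_canonicalHeap_canonicalHeapList hT, rfl, sat_canonicalHeap s T, ih hTg⟩

theorem stmt4 (Sg : List SP) :
    (∃ (s : Stack) (h : Heap), satList s h Sg) ↔ (∃ s : Stack, wellFormed s Sg) :=
  ⟨fun ⟨s, _, hs⟩ => ⟨s, wellFormed_of_satList hs⟩,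
    fun ⟨s, hwf⟩ => ⟨s, canonicalHeapList s Sg, satList_canonicalHeapList hwf⟩⟩
end
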